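/- arXiv:1304.5895 — 5 statements merged into one kernel-verified Lean document; each statement's English description precedes it below -/
import Mathlib

section
/- Let C be a field, R a commutative C-algebra, Γ₀ a linearly ordered commutative group with zero, and v : R → Γ₀ a valuation. Let n ≥ 1 be an integer and ζ ∈ C a primitive n-th root of unity. Let a ∈ C, y ∈ R and t ∈ Γ₀, and suppose that v(algebraMap C R (a·(1 − ζ^s))) ≤ t for every integer s with 1 ≤ s ≤ n − 1. Then v(y^n − algebraMap C R (a^n)) ≤ t^n if and only if v(y − algebraMap C R a) ≤ t. -/
open Polynomial Finset in
lemma key_prod (C : Type*) [Field C] (R : Type*) [CommRing R] [Algebra C R]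
    (n : ℕ) (hn : 1 ≤ n) (ζ : C) (hζ : IsPrimitiveRoot ζ n) (a : C) (y : R) :
    y ^ n - algebraMap C R (a ^ n) =
      ∏ s ∈ Finset.range n, (y - algebraMap C R (ζ ^ s * a)) := by
  have hn0 : 0 < n := hn
  have hmonic : (X ^ n - Polynomial.C (a ^ n) : C[X]).Monic :=
    monic_X_pow_sub_C _ hn0.ne'
  have hroots : (X ^ n - Polynomial.C (a ^ n) : C[X]).roots
      = (Multiset.range n).map (fun s => ζ ^ s * a) := by
    have := hζ.nthRoots_eq (α := a) rfl
    simpa [Polynomial.nthRoots] using this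
  have hcard : Multiset.card (X ^ n - Polynomial.C (a ^ n) : C[X]).roots
      = (X ^ n - Polynomial.C (a ^ n) : C[X]).natDegree := by
    rw [hroots, Multiset.card_map, Multiset.card_range, natDegree_X_pow_sub_C]
  have hid := prod_multiset_X_sub_C_of_monic_of_roots_card_eq hmonic hcard
  rw [hroots, Multiset.map_map] at hid
  have := congrArg (Polynomial.aeval y) hid.symm
  simpa [Finset.prod, Finset.range, map_multiset_prod, Multiset.map_map, Function.comp] using this

/-- Lemma 3.7 (Uconn) of the paper, in abstract valuation-theoretic form:
if `v (a·(1 − ζ^s)) ≤ t` for all `1 ≤ s ≤ n − 1`, where `ζ` is a primitive `n`-th root of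
unity in `C`, then `v (y^n − a^n) ≤ t^n ↔ v (y − a) ≤ t`. -/
theorem stmt_0 (C : Type*) [Field C] (R : Type*) [CommRing R] [Algebra C R]
    (Γ₀ : Type*) [LinearOrderedCommGroupWithZero Γ₀] (v : Valuation R Γ₀)
    (n : ℕ) (hn : 1 ≤ n) (ζ : C) (hζ : IsPrimitiveRoot ζ n)
    (a : C) (y : R) (t : Γ₀)
    (h : ∀ s : ℕ, 1 ≤ s → s ≤ n - 1 → v (algebraMap C R (a * (1 - ζ ^ s))) ≤ t) :
    v (y ^ n - algebraMap C R (a ^ n)) ≤ t ^ n ↔ v (y - algebraMap C R a) ≤ t := by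
  have key := key_prod C R n hn ζ hζ a y
  set z := y - algebraMap C R a with hz
  have hfac : ∀ s : ℕ, y - algebraMap C R (ζ ^ s * a)
      = z + algebraMap C R (a * (1 - ζ ^ s)) := by
    intro s
    simp only [hz, map_mul, map_sub, map_one]
    ring
  have hs' : ∀ s : ℕ, s ∈ Finset.range n → 1 ≤ s →
      v (algebraMap C R (a * (1 - ζ ^ s))) ≤ t := by
    intro s hs h1
    exact h s h1 (Nat.le_sub_one_of_lt (Finset.mem_range.mp hs))
  rw [key, map_prod]
  constructor
  · intro hle
    by_contra hgt
    push_neg at hgt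
    have hv : ∀ s ∈ Finset.range n, v (y - algebraMap C R (ζ ^ s * a)) = v z := by
      intro s hs
      rcases Nat.eq_zero_or_pos s with rfl | h1
      · simp [hz]
      · rw [hfac s]
        exact v.map_add_eq_of_lt_left (lt_of_le_of_lt (hs' s hs h1) hgt)
    rw [Finset.prod_congr rfl hv, Finset.prod_const, Finset.card_range] at hle
    exact absurd hle (not_le.mpr (pow_lt_pow_left₀ hgt zero_le' (by omega)))
  · intro hle
    calc ∏ s ∈ Finset.range n, v (y - algebraMap C R (ζ ^ s * a))
        ≤ ∏ _s ∈ Finset.range n, t := by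
          apply Finset.prod_le_prod' 
          intro s hs
          rcases Nat.eq_zero_or_pos s with rfl | h1
          · simpa [hz] using hle
          · rw [hfac s]
            exact le_trans (v.map_add _ _) (max_le hle (hs' s hs h1))
      _ = t ^ n := by rw [Finset.prod_const, Finset.card_range]
end

section
/- Let p be a prime number, k a field of characteristic p, and k' a perfect closure of k (a perfect field containing k which is purely inseparable over k, e.g. PerfectClosure k p). Consider the field of formal Laurent series k((u)) embedded coefficientwise into k'((u)). If an element x of k'((u)) is algebraic over k((u)) and its minimal polynomial over k((u)) is separable, then x lies in (the image of) k((u)). -/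
/-!
Let `f` be the minimal polynomial of `x` over `k((u))`. After rescaling `x` by a power of `u` and
clearing denominators of `f`, the rescaled `x` becomes a simple root of a polynomial with
coefficients in `k[[u]]`. Truncating it at precision `2c + 1`, where `c` is the order of the
derivative there, gives an approximate root whose finitely many coefficients lie in a finite,
hence bounded-exponent, purely inseparable extension `E` of `k`; Hensel's lemma over `E[[u]]`
produces a root `r` of `f` with `r ^ p ^ n ∈ k((u))`. So `f` is both separable and the minimal
polynomial of a purely inseparable element, which forces `deg f = 1`.
-/

/-- The coefficientwise ring homomorphism `k((u)) → k'((u))` induced by `f : k →+* k'`. -/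
noncomputable def LaurentSeries.mapRingHom {k k' : Type*} [CommRing k] [CommRing k']
    (f : k →+* k') : LaurentSeries k →+* LaurentSeries k' where
  toFun x := x.map f
  map_one' := HahnSeries.map_one f.toMonoidWithZeroHom
  map_mul' x y := HahnSeries.map_mul (f : k →ₙ+* k')
  map_zero' := HahnSeries.map_zero (f : ZeroHom k k')
  map_add' x y := HahnSeries.map_add (f : k →+ k')

open Polynomial

namespace PowerSeries

section CommRing

variable {R : Type*} [CommRing R]

theorem eq_zero_of_forall_X_pow_dvd {f : R⟦X⟧} (h : ∀ n, X ^ n ∣ f) : f = 0 := by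
  ext n
  exact X_pow_dvd_iff.mp (h (n + 1)) n (Nat.lt_succ_self n)

theorem exists_forall_X_pow_dvd_sub {z : ℕ → R⟦X⟧} (hz : ∀ n, X ^ n ∣ z (n + 1) - z n) :
    ∃ w : R⟦X⟧, ∀ n, X ^ n ∣ w - z n := by
  have hmono : ∀ n m, n ≤ m → X ^ n ∣ z m - z n := by
    intro n m hnm
    induction m, hnm using Nat.le_induction with
    | base => simp
    | succ m hnm ih =>
      rw [← sub_add_sub_cancel]
      exact dvd_add ((pow_dvd_pow X hnm).trans (hz m)) ih
  have hcoeff : ∀ n m j, n ≤ m → j < n → coeff j (z m) = coeff j (z n) := fun n m j hnm hj =>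
    sub_eq_zero.mp (by rw [← map_sub]; exact X_pow_dvd_iff.mp (hmono n m hnm) j hj)
  refine ⟨mk fun j => coeff j (z (j + 1)), fun n => X_pow_dvd_iff.mpr fun j hj => ?_⟩
  rw [map_sub, coeff_mk, ← hcoeff (j + 1) (max (j + 1) n) j (le_max_left _ _) j.lt_succ_self,
    hcoeff n (max (j + 1) n) j (le_max_right _ _) hj, sub_self]

theorem X_pow_dvd_map_iff {S : Type*} [CommRing S] {φ : R →+* S} (hφ : Function.Injective φ)
    {n : ℕ} {f : R⟦X⟧} : X ^ n ∣ map φ f ↔ X ^ n ∣ f := by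
  simp only [X_pow_dvd_iff, coeff_map, map_eq_zero_iff φ hφ]

-- Newton's correction `-F(z) / F'(z)` is divisible by `X ^ (c + 1 + j)`, so the quadratic error
-- term of the Taylor expansion at `z` is divisible by `X ^ (2 * c + 2 + j)`.
theorem exists_X_pow_dvd_eval_of_X_pow_dvd {F : R⟦X⟧[X]} {z e : R⟦X⟧} {c j : ℕ}
    (hd : F.derivative.eval z = X ^ c * e) (he : IsUnit e) (hF : X ^ (2 * c + 1 + j) ∣ F.eval z) :
    ∃ z', X ^ (c + 1 + j) ∣ z' - z ∧ X ^ (2 * c + 2 + j) ∣ F.eval z' := by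
  obtain ⟨a, ha⟩ := hF
  obtain ⟨u, rfl⟩ := he
  obtain ⟨δ, hδdef⟩ : ∃ δ : R⟦X⟧, δ = -(X ^ (c + 1 + j) * a * (↑u⁻¹ : R⟦X⟧)) := ⟨_, rfl⟩
  have hδ : X ^ (c + 1 + j) ∣ δ := hδdef ▸ dvd_neg.mpr (dvd_mul_of_dvd_left (dvd_mul_right _ _) _)
  have hlin : F.eval z + F.derivative.eval z * δ = 0 := by
    rw [ha, hd, hδdef]
    linear_combination (-(X ^ (2 * c + 1 + j) * a)) * u.mul_inv
  obtain ⟨q, hq⟩ := F.binomExpansion z δ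
  refine ⟨z + δ, by rwa [add_sub_cancel_left], ?_⟩
  rw [hq, hlin, zero_add]
  have hδ2 : X ^ ((c + 1 + j) * 2) ∣ δ ^ 2 := by
    rw [pow_mul]
    exact pow_dvd_pow_of_dvd hδ 2
  exact ((pow_dvd_pow X (by omega)).trans hδ2).mul_left q

end CommRing

theorem hensels_lemma {E : Type*} [Field E] {F : E⟦X⟧[X]} {y : E⟦X⟧} {c : ℕ}
    (hc : X ^ c ∣ F.derivative.eval y) (hc' : ¬ X ^ (c + 1) ∣ F.derivative.eval y)
    (hF : X ^ (2 * c + 1) ∣ F.eval y) :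
    ∃ z, F.eval z = 0 := by
  let P : ℕ → E⟦X⟧ → Prop := fun j z => X ^ c ∣ F.derivative.eval z ∧
    ¬ X ^ (c + 1) ∣ F.derivative.eval z ∧ X ^ (2 * c + 1 + j) ∣ F.eval z
  have step : ∀ j z, P j z → ∃ z', X ^ (c + 1 + j) ∣ z' - z ∧ P (j + 1) z' := by
    rintro j z ⟨⟨e, he⟩, hd', hFz⟩
    have hunit : IsUnit e := by
      refine isUnit_iff_constantCoeff.mpr (Ne.isUnit fun h0 => hd' ?_)
      rw [he, pow_succ]
      exact mul_dvd_mul_left _ (X_dvd_iff.mpr h0)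
    obtain ⟨z', hz', hFz'⟩ := exists_X_pow_dvd_eval_of_X_pow_dvd he hunit hFz
    have hder : X ^ (c + 1) ∣ F.derivative.eval z' - F.derivative.eval z :=
      ((pow_dvd_pow X (by omega)).trans hz').trans (sub_dvd_eval_sub _ _ _)
    refine ⟨z', hz', ?_, fun h => hd' ?_, by rwa [show 2 * c + 1 + (j + 1) = 2 * c + 2 + j by ring]⟩
    · rw [← sub_add_cancel (F.derivative.eval z') (F.derivative.eval z)]
      exact dvd_add ((pow_dvd_pow X c.le_succ).trans hder) ⟨e, he⟩
    · simpa using dvd_sub h hder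
  choose! next hnext_sub hnext using step
  let seq : ℕ → E⟦X⟧ := fun n => Nat.rec y (fun j z => next j z) n
  have hseq : ∀ n, P n (seq n) := fun n => by
    induction n with
    | zero => exact ⟨hc, hc', hF⟩
    | succ n ih => exact hnext n _ ih
  obtain ⟨z, hz⟩ := exists_forall_X_pow_dvd_sub (z := seq) fun n =>
    (pow_dvd_pow X (show n ≤ c + 1 + n by omega)).trans (hnext_sub n _ (hseq n))
  refine ⟨z, eq_zero_of_forall_X_pow_dvd fun n => ?_⟩
  rw [← sub_add_cancel (F.eval z) (F.eval (seq n))]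
  exact dvd_add ((hz n).trans (sub_dvd_eval_sub _ _ _))
    ((pow_dvd_pow X (by omega)).trans (hseq n).2.2)

theorem hensels_lemma_of_X_pow_dvd_map_sub {E S : Type*} [Field E] [CommRing S]
    {ι : E →+* S} (hι : Function.Injective ι) {F : E⟦X⟧[X]} {z : S⟦X⟧} {y : E⟦X⟧} {c : ℕ}
    (hz : (F.map (map ι)).eval z = 0) (hc : X ^ c ∣ (F.map (map ι)).derivative.eval z)
    (hc' : ¬ X ^ (c + 1) ∣ (F.map (map ι)).derivative.eval z) (hy : X ^ (2 * c + 1) ∣ map ι y - z) :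
    ∃ w, F.eval w = 0 := by
  have hmap : ∀ P : E⟦X⟧[X], map ι (P.eval y) = (P.map (map ι)).eval (map ι y) := fun P => by
    rw [eval_map, eval₂_hom]
  have hcong : ∀ P : E⟦X⟧[X], ∀ m ≤ 2 * c + 1,
      X ^ m ∣ (P.map (map ι)).eval (map ι y) - (P.map (map ι)).eval z := fun P m hm =>
    ((pow_dvd_pow X hm).trans hy).trans (sub_dvd_eval_sub _ _ _)
  rw [derivative_map] at hc hc'
  refine hensels_lemma (y := y) (c := c) ?_ (fun h => hc' ?_) ?_
  · rw [← X_pow_dvd_map_iff hι, hmap, ← sub_add_cancel (eval _ _) (eval z _)]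
    exact dvd_add (hcong _ c (by omega)) hc
  · rw [← X_pow_dvd_map_iff hι, hmap] at h
    simpa using dvd_sub h (hcong F.derivative (c + 1) (by omega))
  · rw [← X_pow_dvd_map_iff hι, hmap]
    simpa [hz] using hcong F _ le_rfl

section ExpChar

variable {R : Type*} [CommRing R] (q : ℕ) [ExpChar R q]

theorem coeff_pow_expChar_pow (w : R⟦X⟧) (n m : ℕ) :
    coeff m (w ^ q ^ n) = if q ^ n ∣ m then coeff (m / q ^ n) w ^ q ^ n else 0 := by
  set P := trunc (m + 1) w
  have htrunc : X ^ (m + 1) ∣ w ^ q ^ n - (P : R⟦X⟧) ^ q ^ n :=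
    (X_pow_dvd_iff.mpr fun j hj => by simp [P, coeff_trunc, hj]).trans (sub_dvd_pow_sub_pow _ _ _)
  rw [← sub_add_cancel (w ^ q ^ n) (P ^ q ^ n), map_add,
    X_pow_dvd_iff.mp htrunc m m.lt_succ_self, zero_add, ← Polynomial.coe_pow, Polynomial.coeff_coe,
    ← map_iterateFrobenius_expand q, Polynomial.coeff_map,
    Polynomial.coeff_expand (expChar_pow_pos R q n)]
  split_ifs with h
  · rw [iterateFrobenius_def, coeff_trunc, if_pos (by have := Nat.div_le_self m (q ^ n); omega)]
  · exact map_zero _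

theorem mem_range_map_of_forall_coeff_mem {R S : Type*} [Ring R] [Ring S] {φ : R →+* S}
    {w : S⟦X⟧} (h : ∀ m, coeff m w ∈ φ.range) : w ∈ (map φ).range :=
  ⟨mk fun m => (h m).choose, by ext m; simp [(h m).choose_spec]⟩

theorem pow_expChar_pow_mem_range_map {S : Type*} [Ring S] {φ : S →+* R} {w : R⟦X⟧} {n : ℕ}
    (h : ∀ j, coeff j w ^ q ^ n ∈ φ.range) : w ^ q ^ n ∈ (map φ).range :=
  mem_range_map_of_forall_coeff_mem fun m => by
    rw [coeff_pow_expChar_pow]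
    split_ifs
    · exact h _
    · exact zero_mem _

end ExpChar

theorem exists_eval_eq_zero_pow_mem_range_map {k k' : Type*} [Field k] [Field k'] [Algebra k k']
    [IsPurelyInseparable k k'] (q : ℕ) [ExpChar k q] {F : k⟦X⟧[X]} {z : k'⟦X⟧}
    (hz : (F.map (map (algebraMap k k'))).eval z = 0)
    (hz' : (F.map (map (algebraMap k k'))).derivative.eval z ≠ 0) :
    ∃ w n, (F.map (map (algebraMap k k'))).eval w = 0 ∧
      w ^ q ^ n ∈ (map (algebraMap k k')).range := by
  set D := (F.map (map (algebraMap k k'))).derivative.eval z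
  set c := D.order.toNat
  let E := IntermediateField.adjoin k ((fun j => coeff j z) '' Set.Iio (2 * c + 1))
  have : FiniteDimensional k E :=
    IntermediateField.finiteDimensional_adjoin fun a _ => IsPurelyInseparable.isIntegral' k a
  have : IsPurelyInseparable k E := IsPurelyInseparable.tower_bot k E k'
  have hmem : ∀ j < 2 * c + 1, coeff j z ∈ E := fun j hj =>
    IntermediateField.subset_adjoin _ _ ⟨j, hj, rfl⟩
  let y : E⟦X⟧ := mk fun j => if h : j < 2 * c + 1 then ⟨coeff j z, hmem j h⟩ else 0
  have hy : X ^ (2 * c + 1) ∣ map (algebraMap E k') y - z :=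
    X_pow_dvd_iff.mpr fun j hj => by
      rw [map_sub, coeff_map, coeff_mk, dif_pos hj]
      exact sub_self _
  have hF : (F.map (map (algebraMap k E))).map (map (algebraMap E k')) =
      F.map (map (algebraMap k k')) := by
    rw [Polynomial.map_map, ← map_comp, ← IsScalarTower.algebraMap_eq]
  have hDc' : ¬ X ^ (c + 1) ∣ D := fun h =>
    coeff_order hz' (X_pow_dvd_iff.mp h c c.lt_succ_self)
  obtain ⟨z₀, hz₀⟩ := hensels_lemma_of_X_pow_dvd_map_sub (algebraMap E k').injective
    (by rwa [hF]) (by rw [hF]; exact X_pow_order_dvd) (by rwa [hF]) hy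
  obtain ⟨v, hv⟩ := pow_expChar_pow_mem_range_map q (w := z₀)
    (n := IsPurelyInseparable.exponent k E) fun j => IsPurelyInseparable.exponent_def' k q _
  refine ⟨map (algebraMap E k') z₀, IsPurelyInseparable.exponent k E, ?_, v, ?_⟩
  · rw [← hF, eval_map, eval₂_hom, hz₀, map_zero]
  · rw [IsScalarTower.algebraMap_eq k E k', map_comp, RingHom.comp_apply, hv, map_pow]

end PowerSeries

namespace LaurentSeries

section CommRing

variable {R S : Type*} [CommRing R] [CommRing S] (φ : R →+* S)

theorem mapRingHom_single (n : ℤ) (a : R) :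
    mapRingHom φ (HahnSeries.single n a) = HahnSeries.single n (φ a) :=
  HahnSeries.map_single (φ : ZeroHom R S)

theorem mapRingHom_ofPowerSeries (v : PowerSeries R) :
    mapRingHom φ (HahnSeries.ofPowerSeries ℤ R v) =
      HahnSeries.ofPowerSeries ℤ S (PowerSeries.map φ v) := by
  ext n
  change φ _ = _
  rw [PowerSeries.coeff_coe, PowerSeries.coeff_coe]
  split_ifs <;> simp

theorem ofPowerSeries_eval_map (F : (PowerSeries R)[X]) (v : PowerSeries S) :
    HahnSeries.ofPowerSeries ℤ S ((F.map (PowerSeries.map φ)).eval v) =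
      (F.map (HahnSeries.ofPowerSeries ℤ R)).eval₂ (mapRingHom φ)
        (HahnSeries.ofPowerSeries ℤ S v) := by
  rw [eval_map, hom_eval₂, eval₂_map]
  congr 1
  ext1 a
  exact (mapRingHom_ofPowerSeries φ a).symm

end CommRing

variable {k k' : Type*} [Field k] [Field k'] {φ : k →+* k'}

theorem exists_powerSeries_polynomial_of_simple_root {f : (LaurentSeries k)[X]}
    {x : LaurentSeries k'}
    (hx : f.eval₂ (mapRingHom φ) x = 0) (hx' : f.derivative.eval₂ (mapRingHom φ) x ≠ 0) :
    ∃ (F : (PowerSeries k)[X]) (z : PowerSeries k') (t : LaurentSeries k),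
      (F.map (PowerSeries.map φ)).eval z = 0 ∧
      (F.map (PowerSeries.map φ)).derivative.eval z ≠ 0 ∧
      ∀ w, (F.map (PowerSeries.map φ)).eval w = 0 →
        f.eval₂ (mapRingHom φ) (mapRingHom φ t * HahnSeries.ofPowerSeries ℤ k' w) = 0 := by
  set α := mapRingHom φ
  set s : LaurentSeries k := HahnSeries.single (-x.order) 1
  have hs : α s⁻¹ * HahnSeries.ofPowerSeries ℤ k' x.powerSeriesPart = x := by
    rw [ofPowerSeries_powerSeriesPart, ← mul_assoc, map_inv₀, mapRingHom_single, map_one,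
      inv_mul_cancel₀ (HahnSeries.single_ne_zero one_ne_zero), one_mul]
  set g := f.comp (C s⁻¹ * X)
  have hg : ∀ y, g.eval₂ α y = f.eval₂ α (α s⁻¹ * y) := fun y => by simp [g, eval₂_comp]
  have hg' : ∀ y, g.derivative.eval₂ α y = α s⁻¹ * f.derivative.eval₂ α (α s⁻¹ * y) :=
    fun y => by simp [g, derivative_comp, eval₂_comp]
  obtain ⟨b, hb, hF⟩ := IsLocalization.integerNormalization_spec (nonZeroDivisors (PowerSeries k)) g
  set F := IsLocalization.integerNormalization (nonZeroDivisors (PowerSeries k)) g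
  replace hF : F.map (HahnSeries.ofPowerSeries ℤ k) = C (HahnSeries.ofPowerSeries ℤ k b) * g := by
    rw [← smul_eq_C_mul]
    exact hF.trans (algebraMap_smul _ b g).symm
  have hb0 : α (HahnSeries.ofPowerSeries ℤ k b) ≠ 0 := by
    rw [_root_.map_ne_zero, ← map_zero (HahnSeries.ofPowerSeries ℤ k),
      HahnSeries.ofPowerSeries_injective.ne_iff]
    exact nonZeroDivisors.ne_zero hb
  have heval : ∀ (P : (PowerSeries k)[X]) (Q : (LaurentSeries k)[X]),
      P.map (HahnSeries.ofPowerSeries ℤ k) = C (HahnSeries.ofPowerSeries ℤ k b) * Q → ∀ w,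
        HahnSeries.ofPowerSeries ℤ k' ((P.map (PowerSeries.map φ)).eval w) =
          α (HahnSeries.ofPowerSeries ℤ k b) * Q.eval₂ α (HahnSeries.ofPowerSeries ℤ k' w) :=
    fun P Q hPQ w => by rw [ofPowerSeries_eval_map, hPQ, eval₂_mul, eval₂_C]
  have hF' : F.derivative.map (HahnSeries.ofPowerSeries ℤ k) =
      C (HahnSeries.ofPowerSeries ℤ k b) * g.derivative := by
    rw [← derivative_map, hF, derivative_C_mul]
  refine ⟨F, x.powerSeriesPart, s⁻¹, ?_, ?_, fun w hw => ?_⟩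
  · apply HahnSeries.ofPowerSeries_injective (Γ := ℤ)
    rw [heval F g hF, hg, hs, hx, mul_zero, map_zero]
  · rw [derivative_map, ← map_ne_zero_iff _ (HahnSeries.ofPowerSeries_injective (Γ := ℤ)),
      heval _ _ hF', hg', hs]
    exact mul_ne_zero hb0 (mul_ne_zero (by simp [s]) hx')
  · have := heval F g hF w
    rw [hw, map_zero, hg] at this
    exact (mul_eq_zero.mp this.symm).resolve_left hb0

theorem exists_root_pow_mem_range_mapRingHom [Algebra k k'] [IsPurelyInseparable k k'] (q : ℕ)
    [ExpChar k q] {f : (LaurentSeries k)[X]} {x : LaurentSeries k'}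
    (hx : f.eval₂ (mapRingHom (algebraMap k k')) x = 0)
    (hx' : f.derivative.eval₂ (mapRingHom (algebraMap k k')) x ≠ 0) :
    ∃ r n, f.eval₂ (mapRingHom (algebraMap k k')) r = 0 ∧
      r ^ q ^ n ∈ (mapRingHom (algebraMap k k')).range := by
  obtain ⟨F, z, t, hz, hz', hroot⟩ := exists_powerSeries_polynomial_of_simple_root hx hx'
  obtain ⟨w, n, hw, v, hv⟩ := PowerSeries.exists_eval_eq_zero_pow_mem_range_map q hz hz'
  refine ⟨_, n, hroot w hw, t ^ q ^ n * HahnSeries.ofPowerSeries ℤ k v, ?_⟩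
  rw [map_mul, map_pow, mapRingHom_ofPowerSeries, hv, map_pow, mul_pow]

end LaurentSeries

theorem mem_range_of_separable_minpoly_of_root_pow_mem {K L : Type*} [Field K] [Field L]
    [Algebra K L] (q : ℕ) [ExpChar K q] {x r : L} (hsep : (minpoly K x).Separable)
    (hr : aeval r (minpoly K x) = 0) {n : ℕ} (hrn : r ^ q ^ n ∈ (algebraMap K L).range) :
    x ∈ (algebraMap K L).range := by
  have hx : IsIntegral K x := by
    by_contra h
    exact not_separable_zero (minpoly.eq_zero h ▸ hsep)
  have hrx : minpoly K r = minpoly K x :=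
    (minpoly.eq_of_irreducible_of_monic (minpoly.irreducible hx) hr (minpoly.monic hx)).symm
  have h1 := (minpoly.natSepDegree_eq_one_iff_pow_mem q).mpr ⟨n, hrn⟩
  rw [hrx, hsep.natSepDegree_eq_natDegree] at h1
  exact minpoly.natDegree_eq_one_iff.mp h1

theorem stmt_2_general (p : ℕ)
    (k : Type*) [Field k]
    (k' : Type*) [Field k'] [ExpChar k' p]
    [Algebra k k'] [IsPurelyInseparable k k']
    (x : LaurentSeries k')
    (hsep : (@minpoly (LaurentSeries k) (LaurentSeries k') _ _
      (LaurentSeries.mapRingHom (algebraMap k k')).toAlgebra x).Separable) :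
    x ∈ (LaurentSeries.mapRingHom (algebraMap k k')).range := by
  let _ : Algebra (LaurentSeries k) (LaurentSeries k') :=
    (LaurentSeries.mapRingHom (algebraMap k k')).toAlgebra
  have : ExpChar k p := (algebraMap k k').expChar (algebraMap k k').injective p
  have : ExpChar (LaurentSeries k) p := expChar_of_injective_ringHom HahnSeries.C_injective p
  obtain ⟨r, n, hr, hrn⟩ := LaurentSeries.exists_root_pow_mem_range_mapRingHom p
    (f := minpoly (LaurentSeries k) x) (minpoly.aeval _ x)
    (hsep.aeval_derivative_ne_zero (minpoly.aeval _ x))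
  exact mem_range_of_separable_minpoly_of_root_pow_mem p hsep hr hrn

/-- Lemma 3.12(3) of the paper: if `k'` is a perfect closure of a field `k` of
characteristic `p`, then any element of `k'((u))` which is algebraic with separable minimal
polynomial over the coefficientwise-embedded subfield `k((u))` already lies in `k((u))`. -/
theorem stmt_2 (p : ℕ) (hp : p.Prime)
    (k : Type*) [Field k] [CharP k p]
    (k' : Type*) [Field k'] [CharP k' p] [ExpChar k' p] [PerfectRing k' p]
    [Algebra k k'] [IsPurelyInseparable k k']
    (x : LaurentSeries k')
    (halg : @IsAlgebraic (LaurentSeries k) (LaurentSeries k') _ _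
      (LaurentSeries.mapRingHom (algebraMap k k')).toAlgebra x)
    (hsep : (@minpoly (LaurentSeries k) (LaurentSeries k') _ _
      (LaurentSeries.mapRingHom (algebraMap k k')).toAlgebra x).Separable) :
    x ∈ (LaurentSeries.mapRingHom (algebraMap k k')).range :=
  stmt_2_general p k k' x hsep
end

section
/- Let L/K be a purely inseparable extension of fields. Let Γ₀ and Δ₀ be linearly ordered commutative groups with zero, and let v : L → Γ₀ and w : L → Δ₀ be valuations on L. If the restrictions of v and w to K (i.e. v ∘ algebraMap K L and w ∘ algebraMap K L) are equivalent valuations on K, then v and w are equivalent valuations on L. -/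
/-- From the proof of Lemma 3.5 of the paper: two valuations on a purely inseparable field
extension `L/K` whose restrictions to `K` are equivalent are themselves equivalent. -/
theorem stmt_5 (K L : Type*) [Field K] [Field L] [Algebra K L] [IsPurelyInseparable K L]
    (Γ₀ : Type*) [LinearOrderedCommGroupWithZero Γ₀]
    (Δ₀ : Type*) [LinearOrderedCommGroupWithZero Δ₀]
    (v : Valuation L Γ₀) (w : Valuation L Δ₀)
    (h : (v.comap (algebraMap K L)).IsEquiv (w.comap (algebraMap K L))) :
    v.IsEquiv w := by
  rw [Valuation.isEquiv_iff_val_le_one]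
  intro x
  obtain ⟨n, c, hc⟩ := IsPurelyInseparable.pow_mem K (ringExpChar K) x
  have hq : (ringExpChar K) ^ n ≠ 0 := by
    have : ExpChar K (ringExpChar K) := ringExpChar.expChar K
    exact pow_ne_zero _ (expChar_pos K (ringExpChar K)).ne'
  have hv : v x ≤ 1 ↔ v (algebraMap K L c) ≤ 1 := by
    rw [hc, map_pow, pow_le_one_iff hq]
  have hw : w x ≤ 1 ↔ w (algebraMap K L c) ≤ 1 := by
    rw [hc, map_pow, pow_le_one_iff hq]
  rw [hv, hw]
  exact Valuation.isEquiv_iff_val_le_one.mp h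
end

section
/- Let C be a field, n and l non-negative integers with n ≥ 1, p a prime, and q = p^l. Let φ be the C-algebra endomorphism of the polynomial ring C[X_1, …, X_n] determined by φ(X_i) = X_i^{q} for each i. Then the induced map on prime spectra Spec(C[X_1, …, X_n]) → Spec(C[X_1, …, X_n]) is surjective; if moreover C has characteristic p, this map is a homeomorphism. -/
/-!
Expansion `X_i ↦ X_i^q` is injective and makes `R[X]` integral over itself (`X_i` is a root of
`T^q - X_i`, as `X_i` acts by `X_i^q`), so by lying-over every prime is the pullback of a prime.
In characteristic `p` with `q = p^l`, every `f` has `f^q = expand q (f with Frobenius^l applied to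
the coefficients)` in the image, and a ring map with this property and nilpotent kernel induces a
homeomorphism on spectra.
-/

/-- The `C`-algebra endomorphism of `C[X_1, …, X_n]` sending each variable `X_i` to
`X_i^q`, a model of the inclusion `C[X] ⊆ C[X^{1/q}]`. -/
noncomputable def powerSubstitution (C : Type*) [CommSemiring C] (n q : ℕ) :
    MvPolynomial (Fin n) C →ₐ[C] MvPolynomial (Fin n) C :=
  MvPolynomial.aeval fun i => MvPolynomial.X i ^ q

namespace MvPolynomial

variable {σ R : Type*} [CommRing R]

theorem isIntegral_expand {q : ℕ} (hq : 0 < q) :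
    (expand q : MvPolynomial σ R →ₐ[R] _).toRingHom.IsIntegral := by
  intro f
  induction f using MvPolynomial.induction_on with
  | C a =>
    rw [← expand_C q a]
    exact RingHom.isIntegralElem_map _
  | add f g hf hg => exact hf.add _ hg
  | mul_X f i hf =>
    refine hf.mul _
      ⟨Polynomial.X ^ q - Polynomial.C (X i), Polynomial.monic_X_pow_sub_C _ hq.ne', ?_⟩
    simp [Polynomial.eval₂_sub, expand_X]

theorem comap_expand_surjective {q : ℕ} (hq : 0 < q) :
    Function.Surjective
      (PrimeSpectrum.comap (expand q : MvPolynomial σ R →ₐ[R] _).toRingHom) :=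
  (isIntegral_expand hq).comap_surjective (expand_injective hq)

theorem pow_expChar_pow_mem_range_expand (p : ℕ) [ExpChar R p] (l : ℕ) (f : MvPolynomial σ R) :
    f ^ p ^ l ∈ (expand (p ^ l) : MvPolynomial σ R →ₐ[R] _).toRingHom.range :=
  ⟨map (iterateFrobenius R p l) f, by
    rw [AlgHom.toRingHom_eq_coe, RingHom.coe_coe, ← map_expand, map_iterateFrobenius_expand]⟩

theorem isHomeomorph_comap_expand (p : ℕ) [ExpChar R p] (l : ℕ) :
    IsHomeomorph
      (PrimeSpectrum.comap (expand (p ^ l) : MvPolynomial σ R →ₐ[R] _).toRingHom) := by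
  have hq : 0 < p ^ l := expChar_pow_pos R p l
  have hker : RingHom.ker (expand (p ^ l) : MvPolynomial σ R →ₐ[R] _).toRingHom = ⊥ :=
    (RingHom.injective_iff_ker_eq_bot _).mp (expand_injective hq)
  exact PrimeSpectrum.isHomeomorph_comap _
    (fun f ↦ ⟨p ^ l, hq, pow_expChar_pow_mem_range_expand p l f⟩) (hker ▸ bot_le)

end MvPolynomial

open MvPolynomial

theorem powerSubstitution_eq_expand (C : Type*) [CommSemiring C] (n q : ℕ) :
    powerSubstitution C n q = expand q :=
  rfl

theorem stmt_6_general (C : Type*) [Field C] (n l p : ℕ) (hp : p.Prime) :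
    Function.Surjective
        (PrimeSpectrum.comap (powerSubstitution C n (p ^ l)).toRingHom) ∧
      (CharP C p →
        IsHomeomorph (PrimeSpectrum.comap (powerSubstitution C n (p ^ l)).toRingHom)) := by
  rw [powerSubstitution_eq_expand]
  refine ⟨comap_expand_surjective (pow_pos hp.pos l), fun _ ↦ ?_⟩
  have : Fact p.Prime := ⟨hp⟩
  exact isHomeomorph_comap_expand p l

/-- From the proof of Lemma 3.5 (phomeo) of the paper: the map on prime spectra induced by
`X_i ↦ X_i^{p^l}` on `C[X_1, …, X_n]` is surjective, and is a homeomorphism when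
`char C = p`. -/
theorem stmt_6 (C : Type*) [Field C] (n l p : ℕ) (hn : 1 ≤ n) (hp : p.Prime) :
    Function.Surjective
        (PrimeSpectrum.comap (powerSubstitution C n (p ^ l)).toRingHom) ∧
      (CharP C p →
        IsHomeomorph (PrimeSpectrum.comap (powerSubstitution C n (p ^ l)).toRingHom)) :=
  stmt_6_general C n l p hp
end

section
/- Let p be a prime, O_M a complete discrete valuation ring of characteristic p with fraction field M, and L/M a purely inseparable field extension of degree p. Let O_L be the discrete valuation ring with fraction field L lying over O_M (the valuation ring of the unique extension of the valuation to L), and suppose the extension has relative ramification index one, i.e. a uniformizer of O_M remains a uniformizer of O_L. Then there exist a unit a ∈ O_M^× and an element b ∈ O_L with b^p = a such that the O_M-algebra homomorphism O_M[Y]/(Y^p − a) → O_L sending Y to b is an isomorphism. -/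
/-!
Because `e = 1`, `π_M` generates the maximal ideal of `O_L`. If the residue extension were
trivial, then `O_L = O_M + π_M O_L`, and completeness of `O_M` would give `O_L = O_M`, hence
`L = M`. So some `b ∈ O_L` has residue `β ∉ k_M`. As `L/M` is purely inseparable of degree
`p`, `a := b ^ p` lies in `M ∩ O_L = O_M`, so `β ^ p ∈ k_M` and `1, β, …, β ^ (p - 1)` are
linearly independent over `k_M`.

Any `O_M`-linear relation can be divided by a power of `π_M` until some coefficient is a unit;
reducing it modulo the maximal ideals then shows that `1, b, …, b ^ (p - 1)` are independent over
`O_M` and, as `1, b, …, b ^ (p - 1), x` are dependent over `M`, that they span `O_L`. Hence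
`X ^ p - a` is the minimal polynomial of `b` over the integrally closed ring `O_M`, and it
generates the kernel of `Y ↦ b`.
-/

open Polynomial IsLocalRing Module

theorem IsPurelyInseparable.pow_finrank_mem_range {K L : Type*} [Field K] [Field L] [Algebra K L]
    [IsPurelyInseparable K L] [FiniteDimensional K L] (x : L) :
    x ^ finrank K L ∈ (algebraMap K L).range := by
  obtain ⟨k, hk⟩ := minpoly.degree_dvd (IsIntegral.of_finite K x)
  rw [hk, pow_mul, minpoly_natDegree_eq]
  exact (algebraMap K L).range.pow_mem (elemExponent_def K x) k

section PthRoot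

variable {K E : Type*} [Field K] [Field E] [Algebra K E] {p : ℕ} [Fact p.Prime] [CharP E p]
  {x : E} {c : K}

theorem minpoly_eq_X_pow_sub_C_of_pow_eq (hx : x ∉ (algebraMap K E).range)
    (hc : x ^ p = algebraMap K E c) : minpoly K x = X ^ p - C c := by
  refine (minpoly.eq_of_irreducible_of_monic ?_ (by simp [hc])
    (monic_X_pow_sub_C c (Fact.out : p.Prime).ne_zero)).symm
  refine X_pow_sub_C_irreducible_of_prime Fact.out fun d hd => hx ⟨d, frobenius_inj E p ?_⟩
  rw [frobenius_def, frobenius_def, ← map_pow, hd, hc]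

theorem linearIndependent_pow_of_pow_eq (hx : x ∉ (algebraMap K E).range)
    (hc : x ^ p = algebraMap K E c) : LinearIndependent K fun i : Fin p => x ^ (i : ℕ) := by
  have hdeg : (minpoly K x).natDegree = p := by
    rw [minpoly_eq_X_pow_sub_C_of_pow_eq hx hc, natDegree_X_pow_sub_C]
  have h := linearIndependent_pow (K := K) x
  rwa [hdeg] at h

end PthRoot

theorem IsDiscreteValuationRing.exists_isUnit_coeff_of_not_linearIndependent {R M : Type*}
    [CommRing R] [IsDomain R] [IsDiscreteValuationRing R] [AddCommGroup M] [Module R M]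
    [Module.IsTorsionFree R M] {ι : Type*} [Fintype ι] {v : ι → M}
    (h : ¬ LinearIndependent R v) :
    ∃ c : ι → R, ∑ i, c i • v i = 0 ∧ ∃ i, IsUnit (c i) := by
  obtain ⟨g, hg, i, hi⟩ := Fintype.not_linearIndependent_iff.1 h
  have : Nonempty ι := ⟨i⟩
  -- a coefficient of least valuation divides all the others
  obtain ⟨j, hj⟩ := Finite.exists_min fun k => addVal R (g k)
  have hgj : g j ≠ 0 := fun h0 => hi <| addVal_eq_top_iff.1 <| by
    simpa [h0] using hj i
  choose c hc using fun k => (addVal_le_iff_dvd.1 (hj k))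
  refine ⟨c, ?_, j, ?_⟩
  · refine (smul_right_injective M hgj).eq_iff.1 ?_
    simp only [Finset.smul_sum, smul_smul, ← hc, hg, smul_zero]
  · exact (mul_left_cancel₀ hgj (by rw [mul_one, ← hc]) : 1 = c j) ▸ isUnit_one

section Residue

variable {R S : Type*} [CommRing R] [CommRing S] [IsLocalRing S] [Algebra R S]
  [IsLocalHom (algebraMap R S)]

theorem mem_maximalIdeal_of_sum_smul_mem_maximalIdeal [IsLocalRing R] {ι : Type*} [Fintype ι]
    {v : ι → S} (hv : LinearIndependent (ResidueField R) (residue S ∘ v)) {c : ι → R}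
    (hc : ∑ i, c i • v i ∈ maximalIdeal S) (i : ι) : c i ∈ maximalIdeal R := by
  rw [← residue_eq_zero_iff] at hc ⊢
  refine Fintype.linearIndependent_iff.1 hv (fun i => residue R (c i)) ?_ i
  simpa [map_sum, Algebra.smul_def] using hc

variable [IsDomain R] [IsDiscreteValuationRing R] [Module.IsTorsionFree R S]

theorem linearIndependent_of_linearIndependent_residue {ι : Type*} [Fintype ι] {v : ι → S}
    (hv : LinearIndependent (ResidueField R) (residue S ∘ v)) : LinearIndependent R v := by
  by_contra h
  obtain ⟨c, hc, i, hi⟩ :=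
    IsDiscreteValuationRing.exists_isUnit_coeff_of_not_linearIndependent h
  exact (mem_maximalIdeal_of_sum_smul_mem_maximalIdeal hv (hc ▸ zero_mem _) i) hi

theorem mem_span_of_not_linearIndependent_snoc {n : ℕ} {v : Fin n → S}
    (hv : LinearIndependent (ResidueField R) (residue S ∘ v)) {x : S}
    (hx : ¬ LinearIndependent R (Fin.snoc v x : Fin (n + 1) → S)) :
    x ∈ Submodule.span R (Set.range v) := by
  obtain ⟨c, hc, i, hi⟩ :=
    IsDiscreteValuationRing.exists_isUnit_coeff_of_not_linearIndependent hx
  rw [Fin.sum_univ_castSucc] at hc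
  simp only [Fin.snoc_castSucc, Fin.snoc_last] at hc
  have hmem : c (Fin.last n) • x ∈ Submodule.span R (Set.range v) := by
    rw [eq_neg_of_add_eq_zero_right hc]
    exact neg_mem <| sum_mem fun j _ => Submodule.smul_mem _ _ (Submodule.subset_span ⟨j, rfl⟩)
  -- otherwise reducing the relation gives one among the `v j` with no unit coefficient
  have hlast : IsUnit (c (Fin.last n)) := by
    by_contra hlast
    have hsum : ∑ j : Fin n, c j.castSucc • v j ∈ maximalIdeal S := by
      rw [eq_neg_of_add_eq_zero_left hc, neg_mem_iff, Algebra.smul_def]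
      exact Ideal.mul_mem_right _ _ (map_nonunit _ _ hlast)
    have hnonunit : ∀ j, c j ∈ maximalIdeal R :=
      Fin.lastCases hlast (mem_maximalIdeal_of_sum_smul_mem_maximalIdeal hv hsum)
    exact hnonunit i hi
  exact (Submodule.smul_mem_iff_of_isUnit _ hlast).1 hmem

theorem span_eq_top_of_linearIndependent_residue {K L : Type*} [Field K] [Algebra R K]
    [IsFractionRing R K] [Field L] [Algebra S L] [Algebra K L] [Algebra R L]
    [IsScalarTower R S L] [IsScalarTower R K L] [FiniteDimensional K L]
    (hSL : Function.Injective (algebraMap S L)) {n : ℕ} (hn : finrank K L ≤ n) {v : Fin n → S}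
    (hv : LinearIndependent (ResidueField R) (residue S ∘ v)) :
    Submodule.span R (Set.range v) = ⊤ := by
  refine eq_top_iff.2 fun x _ => mem_span_of_not_linearIndependent_snoc hv fun h => ?_
  have hK := (LinearIndependent.iff_fractionRing R K).1 <|
    h.map' (IsScalarTower.toAlgHom R S L).toLinearMap (LinearMap.ker_eq_bot.2 hSL)
  have hL := hK.fintype_card_le_finrank
  rw [Fintype.card_fin] at hL
  omega

end Residue

theorem IsDiscreteValuationRing.isLocalHom_algebraMap_of_not_isUnit {R S : Type*} [CommRing R]
    [IsDomain R] [IsDiscreteValuationRing R] [CommRing S] [Algebra R S] {π : R}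
    (hπ : Irreducible π) (h : ¬ IsUnit (algebraMap R S π)) : IsLocalHom (algebraMap R S) := by
  refine ⟨fun x hx => by_contra fun hxu => h ?_⟩
  have hπx : π ∣ x := by
    rw [← Ideal.mem_span_singleton, ← hπ.maximalIdeal_eq]
    exact hxu
  exact isUnit_of_dvd_unit (map_dvd _ hπx) hx

theorem surjective_algebraMap_of_surjective_residue {R S : Type*} [CommRing R] [IsLocalRing R]
    [IsPrecomplete (maximalIdeal R) R] [CommRing S] [IsLocalRing S] [IsNoetherianRing S]
    [Algebra R S] [IsLocalHom (algebraMap R S)]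
    (hmap : (maximalIdeal R).map (algebraMap R S) = maximalIdeal S)
    (hres : Function.Surjective (algebraMap (ResidueField R) (ResidueField S))) :
    Function.Surjective (algebraMap R S) := by
  have : IsHausdorff ((maximalIdeal R).map (algebraMap R S)) S := hmap ▸ inferInstance
  refine surjective_of_mk_map_comp_surjective (I := maximalIdeal R) _ ?_
  rw [hmap]
  exact hres.comp residue_surjective

theorem finrank_eq_one_of_surjective_algebraMap {R S K L : Type*} [CommRing R] [CommRing S]
    [Field K] [Field L] [Algebra R S] [Algebra R K] [Algebra S L] [IsFractionRing S L] [Algebra K L] [Algebra R L] [IsScalarTower R S L] [IsScalarTower R K L]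
    (h : Function.Surjective (algebraMap R S)) : finrank K L = 1 := by
  refine Subalgebra.bot_eq_top_iff_finrank_eq_one.1 (eq_top_iff.2 fun z _ => ?_)
  obtain ⟨x, y, -, rfl⟩ := IsFractionRing.div_surjective (A := S) z
  obtain ⟨x, rfl⟩ := h x
  obtain ⟨y, rfl⟩ := h y
  refine Algebra.mem_bot.2 ⟨algebraMap R K x / algebraMap R K y, ?_⟩
  simp only [map_div₀, ← IsScalarTower.algebraMap_apply]

theorem exists_residue_notMem_range {R S K L : Type*} [CommRing R] [IsLocalRing R]
    [IsPrecomplete (maximalIdeal R) R] [CommRing S] [IsLocalRing S] [IsNoetherianRing S]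
    [Algebra R S] [IsLocalHom (algebraMap R S)] [Field K] [Field L] [Algebra R K]
    [Algebra S L] [IsFractionRing S L] [Algebra K L] [Algebra R L]
    [IsScalarTower R S L] [IsScalarTower R K L]
    (hmap : (maximalIdeal R).map (algebraMap R S) = maximalIdeal S) (hKL : finrank K L ≠ 1) :
    ∃ b : S, residue S b ∉ (algebraMap (ResidueField R) (ResidueField S)).range := by
  by_contra! h
  refine hKL (finrank_eq_one_of_surjective_algebraMap (R := R) (S := S) ?_)
  refine surjective_algebraMap_of_surjective_residue hmap fun β => ?_
  obtain ⟨b, rfl⟩ := residue_surjective β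
  exact h b

section Powers

variable {R S : Type*} [CommRing R] [CommRing S] [Algebra R S] {n : ℕ} {b : S}

theorem aeval_surjective_of_span_pow_eq_top
    (h : Submodule.span R (Set.range fun i : Fin n => b ^ (i : ℕ)) = ⊤) :
    Function.Surjective (aeval b : R[X] →ₐ[R] S) := by
  have hrange : Submodule.span R (Set.range fun i : Fin n => b ^ (i : ℕ)) ≤
      LinearMap.range (aeval b : R[X] →ₐ[R] S).toLinearMap :=
    Submodule.span_le.2 (Set.range_subset_iff.2 fun i => ⟨X ^ (i : ℕ), by simp⟩)
  exact LinearMap.range_eq_top.1 (top_le_iff.1 (h ▸ hrange))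

theorem ker_aeval_eq_span_X_pow_sub_C [IsDomain R] [IsIntegrallyClosed R] [IsDomain S]
    [Module.IsTorsionFree R S] (hn : n ≠ 0) {a : R} (hb : b ^ n = algebraMap R S a)
    (hind : LinearIndependent R fun i : Fin n => b ^ (i : ℕ)) :
    RingHom.ker (aeval b : R[X] →ₐ[R] S) = Ideal.span {X ^ n - C a} := by
  have hmin : minpoly R b = X ^ n - C a :=
    minpoly.eq_of_linearIndependent R b (monic_X_pow_sub_C a hn) (by simp [hb]) n
      (degree_X_pow_sub_C (Nat.pos_of_ne_zero hn) a) hind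
  rw [← hmin, ← minpoly.ker_eval (minpoly.ne_zero_iff.1 (hmin ▸ X_pow_sub_C_ne_zero
    (Nat.pos_of_ne_zero hn) a))]
  rfl

end Powers

/-- From the proof of Lemma 5.1 (sepinsep) of the paper: if `L/M` is a purely inseparable
extension of degree `p` of complete discrete valuation fields of characteristic `p` with
relative ramification index one, then `O_L ≅ O_M[Y]/(Y^p − a)` for some unit `a ∈ O_M^×`;
more precisely, there are a unit `a ∈ O_M^×` and `b ∈ O_L` with `b^p = a` such that the
`O_M`-algebra map `O_M[Y] → O_L`, `Y ↦ b`, is surjective with kernel `(Y^p − a)`. -/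
theorem stmt_8 (p : ℕ) (hp : p.Prime)
    (O_M : Type*) [CommRing O_M] [IsDomain O_M] [IsDiscreteValuationRing O_M] [CharP O_M p]
    [IsAdicComplete (IsLocalRing.maximalIdeal O_M) O_M]
    (M : Type*) [Field M] [Algebra O_M M] [IsFractionRing O_M M]
    (L : Type*) [Field L] [Algebra M L] [IsPurelyInseparable M L]
    (hdeg : Module.finrank M L = p)
    (O_L : Type*) [CommRing O_L] [IsDomain O_L] [IsDiscreteValuationRing O_L]
    [Algebra O_L L] [IsFractionRing O_L L]
    [Algebra O_M O_L] [Algebra O_M L] [IsScalarTower O_M O_L L] [IsScalarTower O_M M L]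
    (hint : ∀ z : M, (∃ y : O_L, algebraMap O_L L y = algebraMap M L z) →
      ∃ w : O_M, algebraMap O_M M w = z)
    (π_M : O_M) (hπM : Irreducible π_M)
    (hram : Irreducible (algebraMap O_M O_L π_M)) :
    ∃ (a : O_M) (b : O_L), IsUnit a ∧ b ^ p = algebraMap O_M O_L a ∧
      Function.Surjective (Polynomial.aeval b : Polynomial O_M →ₐ[O_M] O_L) ∧
        RingHom.ker (Polynomial.aeval b : Polynomial O_M →ₐ[O_M] O_L) =
          Ideal.span {(Polynomial.X : Polynomial O_M) ^ p - Polynomial.C a} := by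
  have : Fact p.Prime := ⟨hp⟩
  have hcomm (w : O_M) :
      algebraMap O_L L (algebraMap O_M O_L w) = algebraMap M L (algebraMap O_M M w) := by
    rw [← IsScalarTower.algebraMap_apply, ← IsScalarTower.algebraMap_apply]
  have : FaithfulSMul O_M O_L := (faithfulSMul_iff_algebraMap_injective _ _).2 fun x y h =>
    IsFractionRing.injective O_M M <| (algebraMap M L).injective <| by rw [← hcomm, ← hcomm, h]
  have := IsDiscreteValuationRing.isLocalHom_algebraMap_of_not_isUnit hπM hram.not_isUnit
  have : FiniteDimensional M L := Module.finite_of_finrank_pos (hdeg ▸ hp.pos)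
  have : CharP (ResidueField O_L) p :=
    .of_ringHom_of_ne_zero ((residue O_L).comp (algebraMap O_M O_L)) p hp.ne_zero
  have hmap : (maximalIdeal O_M).map (algebraMap O_M O_L) = maximalIdeal O_L := by
    rw [hπM.maximalIdeal_eq, Ideal.map_span, Set.image_singleton, hram.maximalIdeal_eq]
  obtain ⟨b, hb⟩ := exists_residue_notMem_range (K := M) (L := L) hmap (hdeg ▸ hp.ne_one)
  obtain ⟨a, ha⟩ : ∃ a : O_M, algebraMap O_M O_L a = b ^ p := by
    obtain ⟨c, hc⟩ :=
      hdeg ▸ IsPurelyInseparable.pow_finrank_mem_range (K := M) (algebraMap O_L L b)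
    obtain ⟨a, rfl⟩ := hint c ⟨b ^ p, by rw [map_pow, hc]⟩
    exact ⟨a, IsFractionRing.injective O_L L (by rw [map_pow, ← hc, hcomm])⟩
  have hres :
      LinearIndependent (ResidueField O_M) (residue O_L ∘ fun i : Fin p => b ^ (i : ℕ)) := by
    simpa [Function.comp_def] using linearIndependent_pow_of_pow_eq hb (c := residue O_M a)
      (by rw [← map_pow, ← ha]; rfl)
  have hbunit : IsUnit b :=
    (residue_ne_zero_iff_isUnit b).1 fun h0 => hb ⟨0, by rw [map_zero, h0]⟩
  refine ⟨a, b, isUnit_of_map_unit (algebraMap O_M O_L) a (ha ▸ hbunit.pow p), ha.symm, ?_,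
    ?_⟩
  · exact aeval_surjective_of_span_pow_eq_top <| span_eq_top_of_linearIndependent_residue
      (K := M) (IsFractionRing.injective O_L L) hdeg.le hres
  · exact ker_aeval_eq_span_X_pow_sub_C hp.ne_zero ha.symm
      (linearIndependent_of_linearIndependent_residue hres)
end
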